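/- Iterating the Graeffe halving step ⌈log₂(N+1)⌉ times reduces coefficient extraction [x^N](P(x)/Q(x)) to the evaluation P'(0)/Q'(0) for some power series P', Q' with Q'(0) a unit; in particular, [x^0](P(x)/Q(x)) = P(0)·Q(0)⁻¹. -/

import Mathlib

/-! Multiplying numerator and denominator by `Q(-x)` turns `P/Q` into `U(x)/V(x²)` with
`U = P(x)Q(-x)`: writing `Q = E(x²) + x·O(x²)` gives `Q(x)Q(-x) = V(x²)` with `V = E² - x·O²`
(a route that avoids dividing by 2). Dividing by a series in `x²` does not mix parities, so
`[x^N](U(x)/V(x²)) = [x^⌊N/2⌋](U_N/V)` with `U_N` the even or odd part of `U` matching `N`.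
Each step halves `N` and squares `Q(0)`, so after `⌈log₂(N+1)⌉` steps `N = 0` and the coefficient
is a quotient of constant terms. -/

/-- Even part: `Σ_i ([x^{2i}]U) x^i`. -/
noncomputable def evenPart {R : Type*} [CommRing R] (U : PowerSeries R) : PowerSeries R :=
  PowerSeries.mk fun n => PowerSeries.coeff (2 * n) U

/-- Odd part: `Σ_i ([x^{2i+1}]U) x^i`. -/
noncomputable def oddPart {R : Type*} [CommRing R] (U : PowerSeries R) : PowerSeries R :=
  PowerSeries.mk fun n => PowerSeries.coeff (2 * n + 1) U

/-- One Graeffe halving step on state `(P, Q, N)`: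
`Q ← even part of Q(x)Q(-x)` (i.e. the `V` with `V(x²) = Q(x)Q(-x)`),
`P ← ` even or odd part of `P(x)Q(-x)` according to the parity of `N`, `N ← ⌊N/2⌋`. -/
noncomputable def graeffeStep {A : Type*} [CommRing A]
    (s : PowerSeries A × PowerSeries A × ℕ) : PowerSeries A × PowerSeries A × ℕ :=
  let U := s.1 * PowerSeries.rescale (-1) s.2.1
  (if s.2.2 % 2 = 0 then evenPart U else oddPart U,
   evenPart (s.2.1 * PowerSeries.rescale (-1) s.2.1),
   s.2.2 / 2)

open PowerSeries
open scoped Ring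

section RingInverse

variable {M N F : Type*} [MonoidWithZero M] [MonoidWithZero N] [FunLike F M N]
  [MonoidHomClass F M N]

theorem map_ringInverse (f : F) {a : M} (ha : IsUnit a) : f a⁻¹ʳ = (f a)⁻¹ʳ := by
  obtain ⟨u, rfl⟩ := ha
  rw [Ring.inverse_unit, show f u = (Units.map (f : M →* N) u : N) from rfl, Ring.inverse_unit,
    ← map_inv]
  rfl

end RingInverse

theorem mul_mul_ringInverse_mul_right {M : Type*} [CommMonoidWithZero M] (a b : M) {c : M}
    (hc : IsUnit c) : a * c * (b * c)⁻¹ʳ = a * b⁻¹ʳ := by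
  rw [Ring.inverse_mul (Or.inr hc), mul_assoc, Ring.mul_inverse_cancel_left _ _ hc]

section

variable {A : Type*} [CommRing A]

local notation "expand₂" => PowerSeries.expand 2 two_ne_zero

theorem constantCoeff_ringInverse (Q : PowerSeries A) :
    constantCoeff Q⁻¹ʳ = (constantCoeff Q)⁻¹ʳ := by
  by_cases hQ : IsUnit Q
  · exact map_ringInverse _ hQ
  · rw [Ring.inverse_non_unit _ hQ, Ring.inverse_non_unit _ (mt isUnit_iff_constantCoeff.mpr hQ),
      map_zero]

theorem coeff_zero_mul_ringInverse (P Q : PowerSeries A) :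
    coeff 0 (P * Q⁻¹ʳ) = constantCoeff P * (constantCoeff Q)⁻¹ʳ := by
  rw [coeff_zero_eq_constantCoeff_apply, map_mul, constantCoeff_ringInverse]

theorem coeff_two_mul_expand_add_X_mul_expand (E O : PowerSeries A) (m : ℕ) :
    coeff (2 * m) (expand₂ E + X * expand₂ O) = coeff m E := by
  rcases m with _ | m
  · simp
  · rw [map_add, coeff_expand_mul, show 2 * (m + 1) = 2 * m + 1 + 1 by ring, coeff_succ_X_mul,
      coeff_expand_of_not_dvd _ _ _ (by omega), add_zero]

theorem coeff_two_mul_add_one_expand_add_X_mul_expand (E O : PowerSeries A) (m : ℕ) :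
    coeff (2 * m + 1) (expand₂ E + X * expand₂ O) = coeff m O := by
  rw [map_add, coeff_succ_X_mul, coeff_expand_of_not_dvd _ _ _ (by omega), coeff_expand_mul,
    zero_add]

theorem evenPart_expand_add_X_mul_expand (E O : PowerSeries A) :
    evenPart (expand₂ E + X * expand₂ O) = E := by
  ext m
  rw [evenPart, coeff_mk, coeff_two_mul_expand_add_X_mul_expand]

theorem oddPart_expand_add_X_mul_expand (E O : PowerSeries A) :
    oddPart (expand₂ E + X * expand₂ O) = O := by
  ext m
  rw [oddPart, coeff_mk, coeff_two_mul_add_one_expand_add_X_mul_expand]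

theorem expand_evenPart_add_X_mul_expand_oddPart (U : PowerSeries A) :
    expand₂ (evenPart U) + X * expand₂ (oddPart U) = U := by
  ext n
  obtain ⟨m, rfl | rfl⟩ := Nat.even_or_odd' n
  · rw [coeff_two_mul_expand_add_X_mul_expand, evenPart, coeff_mk]
  · rw [coeff_two_mul_add_one_expand_add_X_mul_expand, oddPart, coeff_mk]

theorem evenPart_mul_expand (U V : PowerSeries A) :
    evenPart (U * expand₂ V) = evenPart U * V := by
  conv_lhs => rw [← expand_evenPart_add_X_mul_expand_oddPart U]
  rw [add_mul, mul_assoc, ← map_mul, ← map_mul, evenPart_expand_add_X_mul_expand]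

theorem oddPart_mul_expand (U V : PowerSeries A) :
    oddPart (U * expand₂ V) = oddPart U * V := by
  conv_lhs => rw [← expand_evenPart_add_X_mul_expand_oddPart U]
  rw [add_mul, mul_assoc, ← map_mul, ← map_mul, oddPart_expand_add_X_mul_expand]

theorem rescale_neg_one_expand (U : PowerSeries A) : rescale (-1) (expand₂ U) = expand₂ U := by
  ext n
  rw [coeff_rescale, coeff_expand]
  split_ifs with h
  · rw [(even_iff_two_dvd.mpr h).neg_one_pow, one_mul]
  · rw [mul_zero]

theorem mul_rescale_neg_one_self (Q : PowerSeries A) :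
    Q * rescale (-1) Q = expand₂ (evenPart Q ^ 2 - X * oddPart Q ^ 2) := by
  conv_lhs => rw [← expand_evenPart_add_X_mul_expand_oddPart Q]
  simp only [map_add, map_mul, map_sub, map_pow, rescale_neg_one_expand, rescale_X, expand_X,
    map_neg, map_one, neg_mul, one_mul]
  ring

theorem evenPart_mul_rescale_neg_one_self (Q : PowerSeries A) :
    evenPart (Q * rescale (-1) Q) = evenPart Q ^ 2 - X * oddPart Q ^ 2 := by
  have h := evenPart_expand_add_X_mul_expand (evenPart Q ^ 2 - X * oddPart Q ^ 2) 0
  rwa [map_zero, mul_zero, add_zero, ← mul_rescale_neg_one_self] at h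

theorem constantCoeff_evenPart_mul_rescale_neg_one_self (Q : PowerSeries A) :
    constantCoeff (evenPart (Q * rescale (-1) Q)) = constantCoeff Q ^ 2 := by
  rw [evenPart_mul_rescale_neg_one_self, ← coeff_zero_eq_constantCoeff_apply]
  simp [evenPart]

theorem expand_evenPart_mul_rescale_neg_one_self (Q : PowerSeries A) :
    expand₂ (evenPart (Q * rescale (-1) Q)) = Q * rescale (-1) Q := by
  rw [evenPart_mul_rescale_neg_one_self, mul_rescale_neg_one_self]

noncomputable def graeffeCoeff (s : PowerSeries A × PowerSeries A × ℕ) : A :=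
  coeff s.2.2 (s.1 * s.2.1⁻¹ʳ)

theorem isUnit_constantCoeff_graeffeStep {s : PowerSeries A × PowerSeries A × ℕ}
    (hs : IsUnit (constantCoeff s.2.1)) : IsUnit (constantCoeff (graeffeStep s).2.1) := by
  rw [graeffeStep, constantCoeff_evenPart_mul_rescale_neg_one_self]
  exact hs.pow 2

theorem graeffeCoeff_graeffeStep {s : PowerSeries A × PowerSeries A × ℕ}
    (hs : IsUnit (constantCoeff s.2.1)) : graeffeCoeff (graeffeStep s) = graeffeCoeff s := by
  obtain ⟨P, Q, N⟩ := s
  set V := evenPart (Q * rescale (-1) Q)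
  have hV : IsUnit V := isUnit_iff_constantCoeff.mpr (isUnit_constantCoeff_graeffeStep hs)
  have hPQ : P * Q⁻¹ʳ = P * rescale (-1) Q * expand₂ V⁻¹ʳ := by
    rw [map_ringInverse _ hV, expand_evenPart_mul_rescale_neg_one_self,
      mul_mul_ringInverse_mul_right _ _ ((isUnit_iff_constantCoeff.mpr hs).map _)]
  simp only [graeffeCoeff, graeffeStep]
  rw [hPQ]
  obtain ⟨m, rfl | rfl⟩ := Nat.even_or_odd' N
  · rw [if_pos (by omega), show 2 * m / 2 = m by omega, ← evenPart_mul_expand, evenPart, coeff_mk]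
  · rw [if_neg (by omega), show (2 * m + 1) / 2 = m by omega, ← oddPart_mul_expand, oddPart,
      coeff_mk]

theorem graeffeStep_iterate_snd_snd (k : ℕ) (s : PowerSeries A × PowerSeries A × ℕ) :
    (graeffeStep^[k] s).2.2 = s.2.2 / 2 ^ k := by
  induction k with
  | zero => rw [Function.iterate_zero_apply, pow_zero, Nat.div_one]
  | succ k ih => rw [Function.iterate_succ_apply', graeffeStep, ih, Nat.div_div_eq_div_mul, pow_succ]

theorem isUnit_constantCoeff_graeffeStep_iterate (k : ℕ) {s : PowerSeries A × PowerSeries A × ℕ}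
    (hs : IsUnit (constantCoeff s.2.1)) : IsUnit (constantCoeff (graeffeStep^[k] s).2.1) := by
  induction k with
  | zero => exact hs
  | succ k ih => rw [Function.iterate_succ_apply']; exact isUnit_constantCoeff_graeffeStep ih

theorem graeffeCoeff_graeffeStep_iterate (k : ℕ) {s : PowerSeries A × PowerSeries A × ℕ}
    (hs : IsUnit (constantCoeff s.2.1)) : graeffeCoeff (graeffeStep^[k] s) = graeffeCoeff s := by
  induction k with
  | zero => rfl
  | succ k ih =>
    rw [Function.iterate_succ_apply',
      graeffeCoeff_graeffeStep (isUnit_constantCoeff_graeffeStep_iterate k hs), ih]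

end

/-- Iterating the Graeffe halving step `⌈log₂(N+1)⌉` times reduces
`[x^N](P/Q)` to an evaluation `P'(0)·Q'(0)⁻¹` at `x = 0`, for power series `P', Q'`
with `Q'(0)` a unit; in particular `[x^0](P/Q) = P(0)·Q(0)⁻¹`. -/
theorem graeffe_iterate_reduces_to_constant
    {A : Type*} [CommRing A] (P Q : PowerSeries A)
    (hQ0 : IsUnit (PowerSeries.constantCoeff Q)) (N : ℕ) :
    (let s := graeffeStep^[Nat.clog 2 (N + 1)] (P, Q, N)
     s.2.2 = 0 ∧ IsUnit (PowerSeries.constantCoeff s.2.1) ∧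
       PowerSeries.coeff N (P * Ring.inverse Q) =
         PowerSeries.constantCoeff s.1 *
           Ring.inverse (PowerSeries.constantCoeff s.2.1)) ∧
      PowerSeries.coeff 0 (P * Ring.inverse Q) =
        PowerSeries.constantCoeff P * Ring.inverse (PowerSeries.constantCoeff Q) := by
  refine ⟨?_, coeff_zero_mul_ringInverse P Q⟩
  intro s
  have hN : s.2.2 = 0 := by
    rw [graeffeStep_iterate_snd_snd]
    exact Nat.div_eq_of_lt (Nat.le_pow_clog one_lt_two _)
  have hs : IsUnit (constantCoeff s.2.1) := isUnit_constantCoeff_graeffeStep_iterate _ hQ0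
  refine ⟨hN, hs, ?_⟩
  calc coeff N (P * Q⁻¹ʳ) = graeffeCoeff s :=
        (graeffeCoeff_graeffeStep_iterate (Nat.clog 2 (N + 1)) (s := (P, Q, N)) hQ0).symm
    _ = constantCoeff s.1 * (constantCoeff s.2.1)⁻¹ʳ := by
      rw [graeffeCoeff, hN, coeff_zero_mul_ringInverse]
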